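/- arXiv:2304.13338 — 2 statements merged into one kernel-verified Lean document; each statement's English description precedes it below -/
import Mathlib

section
/- If a bistochastic matrix P achieves strong equal treatment for the Example PS profile, then P(1,m1) = P(2,m1) ≤ 1/2, and consequently P_PS dominates P with respect to the profile (i.e., for every player i and every prefix length ℓ, the prefix sum of P_PS's row i along player i's preference is at least that of P). -/
open Finset

/-- Items m1,m2,m3,m4 encoded as 0,1,2,3. Example PS preference profile. -/
def exO : Fin 4 → Fin 4 → Fin 4 :=
  ![![0, 2, 1, 3], ![0, 3, 1, 2], ![1, 2, 0, 3], ![1, 3, 0, 2]]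

def isBistochastic (P : Matrix (Fin 4) (Fin 4) ℝ) : Prop :=
  (∀ i j, 0 ≤ P i j) ∧ (∀ i, ∑ j, P i j = 1) ∧ (∀ j, ∑ i, P i j = 1)

def strongEqualTreatment (P : Matrix (Fin 4) (Fin 4) ℝ) : Prop :=
  ∀ i i' : Fin 4, ∀ ℓ : Fin 4, (∀ k ≤ ℓ, exO i k = exO i' k) →
    ∀ k ≤ ℓ, P i (exO i k) = P i' (exO i' k)

noncomputable def P_PS : Matrix (Fin 4) (Fin 4) ℝ :=
  !![1/2, 0, 1/2, 0; 1/2, 0, 0, 1/2; 0, 1/2, 1/2, 0; 0, 1/2, 0, 1/2]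

/-! Players 1 and 2 have the same top item m1, so strong equal treatment gives them the same
probability on it, and since column m1 sums to 1 that probability is at most 1/2; players 3 and 4
and m2 likewise. So on the top item P never exceeds P_PS, which gives 1/2 there. On every longer
prefix P_PS already puts mass 1 (each player's top two items get 1/2 each), while a prefix sum of
a bistochastic row is at most 1. -/

theorem Matrix.le_half_of_eq_of_colSum_eq_one {ι κ : Type*} [Fintype ι] {P : Matrix ι κ ℝ}
    (hP : ∀ i j, 0 ≤ P i j) {j : κ} (hcol : ∑ i, P i j = 1) {i i' : ι} (hne : i ≠ i')
    (heq : P i j = P i' j) : P i j ≤ 1 / 2 := by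
  have := Finset.add_le_sum (fun k _ ↦ hP k j) (mem_univ i) (mem_univ i') hne
  linarith

theorem Matrix.sum_comp_le_rowSum {ι κ μ : Type*} [Fintype κ] {P : Matrix ι κ ℝ}
    (hP : ∀ i j, 0 ≤ P i j) (i : ι) {σ : μ → κ} (hσ : σ.Injective) (s : Finset μ) :
    ∑ k ∈ s, P i (σ k) ≤ ∑ j, P i j :=
  (sum_map s ⟨σ, hσ⟩ (P i)).symm.le.trans (sum_le_univ_sum_of_nonneg (hP i))

lemma exO_injective (i : Fin 4) : (exO i).Injective := by
  revert i; decide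

lemma exists_ne_exO_zero_eq (i : Fin 4) : ∃ i', i' ≠ i ∧ exO i' 0 = exO i 0 := by
  revert i; decide

lemma strongEqualTreatment.top_eq {P : Matrix (Fin 4) (Fin 4) ℝ} (h : strongEqualTreatment P)
    {i i' : Fin 4} (hii' : exO i 0 = exO i' 0) : P i (exO i 0) = P i' (exO i' 0) :=
  h i i' 0 (fun k hk ↦ by rwa [Fin.le_zero_iff.1 hk]) 0 le_rfl

lemma isBistochastic.top_le_half_of_strongEqualTreatment {P : Matrix (Fin 4) (Fin 4) ℝ}
    (hbi : isBistochastic P) (hset : strongEqualTreatment P) (i : Fin 4) :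
    P i (exO i 0) ≤ 1 / 2 := by
  obtain ⟨i', hne, hi'⟩ := exists_ne_exO_zero_eq i
  refine Matrix.le_half_of_eq_of_colSum_eq_one hbi.1 (hbi.2.2 _) hne.symm ?_
  rw [hset.top_eq hi'.symm, hi']

lemma P_PS_nonneg (i j : Fin 4) : 0 ≤ P_PS i j := by
  fin_cases i <;> fin_cases j <;> norm_num [P_PS]

lemma P_PS_top (i : Fin 4) : P_PS i (exO i 0) = 1 / 2 := by
  fin_cases i <;> simp [P_PS, exO]

lemma one_le_P_PS_prefixSum (i : Fin 4) {ℓ : Fin 4} (hℓ : 1 ≤ ℓ) :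
    1 ≤ ∑ k ∈ Iic ℓ, P_PS i (exO i k) :=
  calc 1 = ∑ k ∈ Iic 1, P_PS i (exO i k) := by
        rw [show Iic (1 : Fin 4) = {0, 1} by decide, sum_pair (by decide)]
        fin_cases i <;> norm_num [P_PS, exO, Matrix.cons_val_two, Matrix.cons_val_three]
    _ ≤ _ := sum_le_sum_of_subset_of_nonneg (Iic_subset_Iic.2 hℓ) fun _ _ _ ↦ P_PS_nonneg _ _

theorem stmt5 (P : Matrix (Fin 4) (Fin 4) ℝ)
    (hbi : isBistochastic P) (hset : strongEqualTreatment P) :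
    P 0 0 = P 1 0 ∧ P 0 0 ≤ 1/2 ∧
    (∀ i : Fin 4, ∀ ℓ : Fin 4,
      ∑ k ∈ Finset.Iic ℓ, P i (exO i k) ≤ ∑ k ∈ Finset.Iic ℓ, P_PS i (exO i k)) := by
  have htop := hbi.top_le_half_of_strongEqualTreatment hset
  refine ⟨hset.top_eq (i := 0) (i' := 1) rfl, htop 0, fun i ℓ ↦ ?_⟩
  rcases eq_or_ne ℓ 0 with rfl | hℓ
  · simpa only [show Iic (0 : Fin 4) = {0} by decide, sum_singleton, P_PS_top] using htop i
  · calc ∑ k ∈ Iic ℓ, P i (exO i k) ≤ ∑ j, P i j :=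
          Matrix.sum_comp_le_rowSum hbi.1 i (exO_injective i) _
      _ = 1 := hbi.2.1 i
      _ ≤ _ := one_le_P_PS_prefixSum i (Fin.one_le_of_ne_zero hℓ)
end

section
/- Consumption rate invariant: if under the OnlinePSVar rate-update rule a surviving player i, who joined consuming an item at time t_i < t with rate s_i = 1/(1−t_i), loses a tournament at time t to a winner d who joined at time t_d < t with rate s_d = 1/(1−t_d), where the winning probabilities are p_d = (t−t_d)·s_d and p_i = (t−t_i)·s_i with p_d < 1, then the updated rate s = s_i + s_d·p_i/(1−p_d) equals 1/(1−t). -/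
theorem stmt6 (t_i t_d t s_i s_d p_i p_d : ℝ)
    (h_i : t_i < t) (h_d : t_d < t) (ht : t < 1)
    (hs_i : s_i = 1 / (1 - t_i)) (hs_d : s_d = 1 / (1 - t_d))
    (hp_i : p_i = (t - t_i) * s_i) (hp_d : p_d = (t - t_d) * s_d)
    (hpd1 : p_d < 1) :
    s_i + s_d * (p_i / (1 - p_d)) = 1 / (1 - t) := by
  have hti : (1 : ℝ) - t_i ≠ 0 := by nlinarith
  have htd : (1 : ℝ) - t_d ≠ 0 := by nlinarith
  have ht1 : (1 : ℝ) - t ≠ 0 := by nlinarith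
  subst hs_i hs_d hp_i hp_d
  have hpd : 1 - (t - t_d) * (1 / (1 - t_d)) ≠ 0 := (sub_pos.2 hpd1).ne'
  field_simp
  have h3 : (1:ℝ) - t_d - (t - t_d) = 1 - t := by ring
  rw [h3, add_mul, div_mul_cancel₀ _ ht1]
  ring
end
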